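/- Let V be a variation of Lie quadratics on [t0,t1] such that V(0,t) = D for all t, where D ∈ ℝ³ is constant. Set Y₁ := V^(1,0)(0,·) and Y₂ := V^(2,0)(0,·). Then for all t ∈ [t0,t1]: Y₂'''(t) + D × Y₂''(t) = 2·(Y₁''(t) × Y₁(t)). -/

import Mathlib

noncomputable section
open scoped RealInnerProductSpace

/-- `ℝ³` with the Euclidean inner product. -/
abbrev E3 : Type := EuclideanSpace ℝ (Fin 3)

/-- The cross product on `ℝ³`; with `⁅u,v⁆ := cross u v`, `ℝ³` is the Lie algebra `so(3)`. -/
def cross (u v : E3) : E3 :=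
  (WithLp.equiv 2 (Fin 3 → ℝ)).symm
    ![u 1 * v 2 - u 2 * v 1, u 2 * v 0 - u 0 * v 2, u 0 * v 1 - u 1 * v 0]

namespace Stmt13Aux

def crossl : E3 →ₗ[ℝ] E3 →ₗ[ℝ] E3 :=
  LinearMap.mk₂ ℝ cross
    (by intro x y z; ext i; fin_cases i <;> simp [cross] <;> ring)
    (by intro c x y; ext i; fin_cases i <;> simp [cross] <;> ring)
    (by intro x y z; ext i; fin_cases i <;> simp [cross] <;> ring)
    (by intro c x y; ext i; fin_cases i <;> simp [cross] <;> ring)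

def crossL : E3 →L[ℝ] E3 →L[ℝ] E3 :=
  LinearMap.toContinuousLinearMap
    { toFun := fun u => LinearMap.toContinuousLinearMap (crossl u)
      map_add' := by intro u v; ext w; simp
      map_smul' := by intro c u; ext w; simp }

lemma crossL_apply (u v : E3) : crossL u v = cross u v := rfl

lemma cross_zero_left (v : E3) : cross 0 v = 0 := by
  rw [← crossL_apply]; simp

lemma cross_anticomm (u v : E3) : cross u v = - cross v u := by
  ext i; fin_cases i <;> simp [cross] <;> ring

def Dh (G : ℝ × ℝ → E3) : ℝ × ℝ → E3 := fun p => fderiv ℝ G p (1, 0)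
def Dt (G : ℝ × ℝ → E3) : ℝ × ℝ → E3 := fun p => fderiv ℝ G p (0, 1)

lemma contDiff_Dv {G : ℝ × ℝ → E3} (hG : ContDiff ℝ (⊤ : ℕ∞) G) (v : ℝ × ℝ) :
    ContDiff ℝ (⊤ : ℕ∞) (fun p => fderiv ℝ G p v) :=
  (hG.fderiv_right (by simp)).clm_apply contDiff_const

lemma contDiff_Dh {G : ℝ × ℝ → E3} (hG : ContDiff ℝ (⊤ : ℕ∞) G) : ContDiff ℝ (⊤ : ℕ∞) (Dh G) :=
  contDiff_Dv hG _
lemma contDiff_Dt {G : ℝ × ℝ → E3} (hG : ContDiff ℝ (⊤ : ℕ∞) G) : ContDiff ℝ (⊤ : ℕ∞) (Dt G) :=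
  contDiff_Dv hG _

lemma deriv_h {G : ℝ × ℝ → E3} (hG : Differentiable ℝ G) (h t : ℝ) :
    deriv (fun h' => G (h', t)) h = Dh G (h, t) := by
  have hline : HasDerivAt (fun h' : ℝ => ((h' : ℝ), t)) ((1 : ℝ), (0 : ℝ)) h :=
    (hasDerivAt_id h).prodMk (hasDerivAt_const h t)
  exact ((hG (h, t)).hasFDerivAt.comp_hasDerivAt h hline).deriv

lemma deriv_t {G : ℝ × ℝ → E3} (hG : Differentiable ℝ G) (h t : ℝ) :
    deriv (fun t' => G (h, t')) t = Dt G (h, t) := by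
  have hline : HasDerivAt (fun t' : ℝ => ((h : ℝ), t')) ((0 : ℝ), (1 : ℝ)) t :=
    (hasDerivAt_const t h).prodMk (hasDerivAt_id t)
  exact ((hG (h, t)).hasFDerivAt.comp_hasDerivAt t hline).deriv

lemma fderiv_apply_vec {G : ℝ × ℝ → E3} (hG : ContDiff ℝ (⊤ : ℕ∞) G) (v : ℝ × ℝ) (p w : ℝ × ℝ) :
    fderiv ℝ (fun q => fderiv ℝ G q v) p w = fderiv ℝ (fderiv ℝ G) p w v := by
  have hd : DifferentiableAt ℝ (fderiv ℝ G) p :=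
    ((hG.fderiv_right (m := (⊤ : ℕ∞)) ((by simp))).differentiable (by simp)) p
  have := (hd.hasFDerivAt.clm_apply (hasFDerivAt_const v p)).fderiv
  rw [this]
  simp

lemma Dh_Dt_comm {G : ℝ × ℝ → E3} (hG : ContDiff ℝ (⊤ : ℕ∞) G) : Dh (Dt G) = Dt (Dh G) := by
  funext p
  have hdiff : Differentiable ℝ G := hG.differentiable (by simp)
  have hsym := second_derivative_symmetric (f := G) (f' := fderiv ℝ G)
    (f'' := fderiv ℝ (fderiv ℝ G) p)
    (fun y => (hdiff y).hasFDerivAt)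
    ((((hG.fderiv_right (m := (⊤ : ℕ∞)) ((by simp))).differentiable (by simp)) p).hasFDerivAt)
  show fderiv ℝ (fun q => fderiv ℝ G q (0,1)) p (1,0)
      = fderiv ℝ (fun q => fderiv ℝ G q (1,0)) p (0,1)
  rw [fderiv_apply_vec hG _ p, fderiv_apply_vec hG _ p]
  exact (hsym _ _).symm

lemma contDiff_cross {f g : ℝ × ℝ → E3} (hf : ContDiff ℝ (⊤ : ℕ∞) f) (hg : ContDiff ℝ (⊤ : ℕ∞) g) :
    ContDiff ℝ (⊤ : ℕ∞) (fun q => cross (f q) (g q)) :=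
  (crossL.contDiff.comp hf).clm_apply hg

lemma Dv_cross {f g : ℝ × ℝ → E3} (hf : Differentiable ℝ f) (hg : Differentiable ℝ g)
    (v p : ℝ × ℝ) :
    fderiv ℝ (fun q => cross (f q) (g q)) p v
      = cross (fderiv ℝ f p v) (g p) + cross (f p) (fderiv ℝ g p v) := by
  have h1 : HasFDerivAt (fun q => crossL (f q)) (crossL.comp (fderiv ℝ f p)) p :=
    crossL.hasFDerivAt.comp p (hf p).hasFDerivAt
  have h3 := (h1.clm_apply (hg p).hasFDerivAt).fderiv
  have he : (fun q => cross (f q) (g q)) = fun q => crossL (f q) (g q) := rfl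
  rw [he, h3]
  simp [crossL_apply]
  rw [add_comm]

lemma iter_t (n : ℕ) : ∀ {G : ℝ × ℝ → E3}, ContDiff ℝ (⊤ : ℕ∞) G → ∀ h0 : ℝ,
    (fun t => iteratedDeriv n (fun s => G (h0, s)) t) = fun t => (Dt^[n] G) (h0, t) := by
  induction n with
  | zero => intro G hG h0; simp
  | succ n ih =>
    intro G hG h0
    funext t
    rw [iteratedDeriv_succ']
    have hd : deriv (fun s => G (h0, s)) = fun s => Dt G (h0, s) :=
      funext fun s => deriv_t (hG.differentiable (by simp)) h0 s
    rw [hd, congrFun (ih (contDiff_Dt hG) h0) t, Function.iterate_succ_apply]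

lemma iter_h (n : ℕ) : ∀ {G : ℝ × ℝ → E3}, ContDiff ℝ (⊤ : ℕ∞) G → ∀ t0 : ℝ,
    (fun h => iteratedDeriv n (fun h' => G (h', t0)) h) = fun h => (Dh^[n] G) (h, t0) := by
  induction n with
  | zero => intro G hG t0; simp
  | succ n ih =>
    intro G hG t0
    funext h
    rw [iteratedDeriv_succ']
    have hd : deriv (fun h' => G (h', t0)) = fun h' => Dh G (h', t0) :=
      funext fun h' => deriv_h (hG.differentiable (by simp)) h' t0
    rw [hd, congrFun (ih (contDiff_Dh hG) t0) h, Function.iterate_succ_apply]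

end Stmt13Aux

open Stmt13Aux in
/-- The order-2 variational equation along a constant base Lie quadratic `V(0,·) = D`:
with `Y₁ := ∂ₕV(0,·)` and `Y₂ := ∂ₕ²V(0,·)`, one has
`Y₂''' + D × Y₂'' = 2·(Y₁'' × Y₁)` on `[t0,t1]`. -/
theorem stmt_13 (t0 t1 : ℝ) (ht : t0 < t1) (V : ℝ → ℝ → E3)
    (hV : ContDiff ℝ (⊤ : ℕ∞) (Function.uncurry V))
    (hLQ : ∀ h ∈ Set.Icc (-1 : ℝ) 1, ∀ t ∈ Set.Icc t0 t1,
        iteratedDeriv 3 (V h) t = cross (iteratedDeriv 2 (V h) t) (V h t))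
    (D : E3) (hbase : ∀ t ∈ Set.Icc t0 t1, V 0 t = D) :
    ∀ t ∈ Set.Icc t0 t1,
      iteratedDeriv 3 (fun s => iteratedDeriv 2 (fun h => V h s) 0) t +
          cross D (iteratedDeriv 2 (fun s => iteratedDeriv 2 (fun h => V h s) 0) t) =
        (2 : ℝ) •
          cross (iteratedDeriv 2 (fun s => deriv (fun h => V h s) 0) t)
            (deriv (fun h => V h t) 0) := by
  set W : ℝ × ℝ → E3 := Function.uncurry V with hWdef
  have hWsm : ContDiff ℝ (⊤ : ℕ∞) W := hV
  have hWdiff : Differentiable ℝ W := hWsm.differentiable (by simp)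
  -- names for the partial derivatives
  set A1 : ℝ × ℝ → E3 := Dh W with hA1def
  set A2 : ℝ × ℝ → E3 := Dh A1 with hA2def
  set T1 : ℝ × ℝ → E3 := Dt W with hT1def
  set T2 : ℝ × ℝ → E3 := Dt T1 with hT2def
  set T3 : ℝ × ℝ → E3 := Dt T2 with hT3def
  have hA1 : ContDiff ℝ (⊤ : ℕ∞) A1 := contDiff_Dh hWsm
  have hA2 : ContDiff ℝ (⊤ : ℕ∞) A2 := contDiff_Dh hA1
  have hT1 : ContDiff ℝ (⊤ : ℕ∞) T1 := contDiff_Dt hWsm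
  have hT2 : ContDiff ℝ (⊤ : ℕ∞) T2 := contDiff_Dt hT1
  have hT3 : ContDiff ℝ (⊤ : ℕ∞) T3 := contDiff_Dt hT2
  have hDtA1 : ContDiff ℝ (⊤ : ℕ∞) (Dt A1) := contDiff_Dt hA1
  have hDtDtA1 : ContDiff ℝ (⊤ : ℕ∞) (Dt (Dt A1)) := contDiff_Dt hDtA1
  have hDhT2 : ContDiff ℝ (⊤ : ℕ∞) (Dh T2) := contDiff_Dh hT2
  -- commutation of partial derivatives
  have c1 : Dh T2 = Dt (Dt A1) := by
    rw [hT2def, Dh_Dt_comm hT1, hT1def, Dh_Dt_comm hWsm]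
  have c2 : Dh (Dh T2) = Dt (Dt A2) := by
    rw [c1, Dh_Dt_comm hDtA1, Dh_Dt_comm hA1]
  have c3 : Dh (Dh T3) = Dt (Dt (Dt A2)) := by
    have : Dh T3 = Dt (Dt (Dt A1)) := by
      rw [hT3def, Dh_Dt_comm hT2, c1]
    rw [this, Dh_Dt_comm hDtDtA1, Dh_Dt_comm hDtA1, Dh_Dt_comm hA1]
  -- the Lie quadratic equation transported to partial-derivative form
  have hEq : ∀ h ∈ Set.Icc (-1 : ℝ) 1, ∀ t ∈ Set.Icc t0 t1,
      T3 (h, t) = cross (T2 (h, t)) (W (h, t)) := by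
    intro h hh t htm
    have h3 := congrFun (iter_t 3 hWsm h) t
    have h2 := congrFun (iter_t 2 hWsm h) t
    have : iteratedDeriv 3 (fun s => W (h, s)) t
        = cross (iteratedDeriv 2 (fun s => W (h, s)) t) (W (h, t)) := hLQ h hh t htm
    rw [h3, h2] at this
    exact this
  -- the open rectangle
  set U : Set (ℝ × ℝ) := Set.Ioo (-1 : ℝ) 1 ×ˢ Set.Ioo t0 t1 with hUdef
  have hUopen : IsOpen U := (isOpen_Ioo).prod (isOpen_Ioo)
  have hmemU : ∀ t ∈ Set.Ioo t0 t1, ((0 : ℝ), t) ∈ U := by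
    intro t htm
    exact ⟨by constructor <;> norm_num, htm⟩
  -- the cross-product right-hand side as a function
  set R : ℝ × ℝ → E3 := fun q => cross (T2 q) (W q) with hRdef
  have hRsm : ContDiff ℝ (⊤ : ℕ∞) R := contDiff_cross hT2 hWsm
  have hT3R : Set.EqOn T3 R U := by
    intro p hp
    exact hEq p.1 (Set.mem_Icc_of_Ioo hp.1) p.2 (Set.mem_Icc_of_Ioo hp.2)
  -- first h-derivative of T3 agrees with that of R on U
  have hDhT3R : Set.EqOn (Dh T3) (Dh R) U := by
    intro p hp
    have : T3 =ᶠ[nhds p] R :=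
      Filter.eventuallyEq_of_mem (hUopen.mem_nhds hp) hT3R
    show fderiv ℝ T3 p (1, 0) = fderiv ℝ R p (1, 0)
    rw [this.fderiv_eq]
  -- product rule for R
  have hDhR : Dh R = fun q => cross (Dh T2 q) (W q) + cross (T2 q) (Dh W q) := by
    funext q
    exact Dv_cross (hT2.differentiable (by simp)) hWdiff (1, 0) q
  -- second h-derivative of T3 at interior points
  have key : ∀ t ∈ Set.Ioo t0 t1,
      Dh (Dh T3) (0, t)
        = cross (Dh (Dh T2) (0, t)) (W (0, t)) + cross (Dh T2 (0, t)) (Dh W (0, t))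
          + (cross (Dh T2 (0, t)) (Dh W (0, t)) + cross (T2 (0, t)) (Dh (Dh W) (0, t))) := by
    intro t htm
    have hp : ((0 : ℝ), t) ∈ U := hmemU t htm
    have hev : Dh T3 =ᶠ[nhds ((0 : ℝ), t)] Dh R :=
      Filter.eventuallyEq_of_mem (hUopen.mem_nhds hp) hDhT3R
    have e1 : Dh (Dh T3) (0, t) = Dh (Dh R) (0, t) := by
      show fderiv ℝ (Dh T3) (0, t) (1, 0) = fderiv ℝ (Dh R) (0, t) (1, 0)
      rw [hev.fderiv_eq]
    rw [e1, hDhR]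
    -- differentiate the sum
    have hb1 : ContDiff ℝ (⊤ : ℕ∞) (fun q => cross (Dh T2 q) (W q)) := contDiff_cross hDhT2 hWsm
    have hb2 : ContDiff ℝ (⊤ : ℕ∞) (fun q => cross (T2 q) (Dh W q)) := contDiff_cross hT2 hA1
    show fderiv ℝ (fun q => cross (Dh T2 q) (W q) + cross (T2 q) (Dh W q)) (0, t) (1, 0) = _
    rw [fderiv_fun_add ((hb1.differentiable (by simp)) _) ((hb2.differentiable (by simp)) _)]
    show fderiv ℝ (fun q => cross (Dh T2 q) (W q)) (0, t) (1, 0)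
        + fderiv ℝ (fun q => cross (T2 q) (Dh W q)) (0, t) (1, 0) = _
    rw [Dv_cross (hDhT2.differentiable (by simp)) hWdiff (1, 0) (0, t),
      Dv_cross (hT2.differentiable (by simp)) (hA1.differentiable (by simp)) (1, 0) (0, t)]
    rfl
  -- base-line values
  have hWD : ∀ t ∈ Set.Icc t0 t1, W (0, t) = D := fun t htm => hbase t htm
  have hT1zero : ∀ s ∈ Set.Ioo t0 t1, T1 (0, s) = 0 := by
    intro s hs
    have : deriv (fun t' => W (0, t')) s = Dt W (0, s) := deriv_t hWdiff 0 s
    rw [hT1def, ← this]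
    have hev : (fun t' => W (0, t')) =ᶠ[nhds s] fun _ => D :=
      Filter.eventuallyEq_of_mem (isOpen_Ioo.mem_nhds hs)
        (fun x hx => hWD x (Set.mem_Icc_of_Ioo hx))
    rw [hev.deriv_eq, deriv_const]
  have hT2zero : ∀ t ∈ Set.Ioo t0 t1, T2 (0, t) = 0 := by
    intro t htm
    have : deriv (fun t' => T1 (0, t')) t = Dt T1 (0, t) := deriv_t (hT1.differentiable (by simp)) 0 t
    rw [hT2def, ← this]
    have hev : (fun t' => T1 (0, t')) =ᶠ[nhds t] fun _ => (0 : E3) :=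
      Filter.eventuallyEq_of_mem (isOpen_Ioo.mem_nhds htm) (fun x hx => hT1zero x hx)
    rw [hev.deriv_eq, deriv_const]
  -- the two sides as functions of t
  set LHSf : ℝ → E3 := fun t => Dt (Dt (Dt A2)) (0, t) + cross D (Dt (Dt A2) (0, t)) with hL
  set RHSf : ℝ → E3 := fun t => (2 : ℝ) • cross (Dt (Dt A1) (0, t)) (A1 (0, t)) with hR
  have hLcont : Continuous LHSf := by
    have h1 : Continuous fun t : ℝ => ((0 : ℝ), t) := continuous_const.prodMk continuous_id
    exact (((contDiff_Dt (contDiff_Dt (contDiff_Dt hA2))).continuous.comp h1).add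
      (((crossL D).continuous).comp ((contDiff_Dt (contDiff_Dt hA2)).continuous.comp h1)))
  have hRcont : Continuous RHSf := by
    have h1 : Continuous fun t : ℝ => ((0 : ℝ), t) := continuous_const.prodMk continuous_id
    exact (continuous_const (y := (2 : ℝ))).smul ((contDiff_cross hDtDtA1 hA1).continuous.comp h1)
  have hEqOn : Set.EqOn LHSf RHSf (Set.Ioo t0 t1) := by
    intro t htm
    have hk := key t htm
    rw [hT2zero t htm, hWD t (Set.mem_Icc_of_Ioo htm), cross_zero_left, add_zero,
      c3, c2, c1] at hk
    show Dt (Dt (Dt A2)) (0, t) + cross D (Dt (Dt A2) (0, t))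
        = (2 : ℝ) • cross (Dt (Dt A1) (0, t)) (A1 (0, t))
    rw [hk, two_smul]
    have : cross (Dt (Dt A2) (0, t)) D = - cross D (Dt (Dt A2) (0, t)) := cross_anticomm _ _
    rw [this]
    abel
  have hEqIcc : Set.EqOn LHSf RHSf (Set.Icc t0 t1) := by
    have := hEqOn.closure hLcont hRcont
    rwa [closure_Ioo ht.ne] at this
  -- translate the goal
  intro t htm
  have e1 : (fun s => deriv (fun h => V h s) 0) = fun s => A1 (0, s) := by
    funext s
    exact deriv_h hWdiff 0 s
  have e2 : (fun s => iteratedDeriv 2 (fun h => V h s) 0) = fun s => A2 (0, s) := by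
    funext s
    exact congrFun (iter_h 2 hWsm s) 0
  have e3 : deriv (fun h => V h t) 0 = A1 (0, t) := deriv_h hWdiff 0 t
  rw [e1, e2, e3]
  have e4 : iteratedDeriv 3 (fun s => A2 (0, s)) t = Dt (Dt (Dt A2)) (0, t) :=
    congrFun (iter_t 3 hA2 0) t
  have e5 : iteratedDeriv 2 (fun s => A2 (0, s)) t = Dt (Dt A2) (0, t) :=
    congrFun (iter_t 2 hA2 0) t
  have e6 : iteratedDeriv 2 (fun s => A1 (0, s)) t = Dt (Dt A1) (0, t) :=
    congrFun (iter_t 2 hA1 0) t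
  rw [e4, e5, e6]
  exact hEqIcc htm
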